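/- arXiv:0907.2369 — 3 statements merged into one kernel-verified Lean document; each statement's English description precedes it below -/
import Mathlib

section
/- For any nonzero vectors ψ₁, ψ₂ ∈ ℂ^k with ‖ψ₁‖ = ‖ψ₂‖ = 1, the operator A = |ψ₁⟩⟨ψ₂| − |ψ₂⟩⟨ψ₁| + ⟨ψ₁|ψ₂⟩·𝕀_k satisfies A A† ≤ 𝕀_k (i.e., 𝕀_k − A A† is positive semidefinite). -/
open Matrix ComplexOrder

noncomputable section

/-! Let `P` be the orthogonal projection onto `ψ₂ᗮ`. A direct expansion shows that
`x† (1 - A A†) x` is the Gram determinant `‖P ψ₁‖² ‖P x‖² - |⟨P ψ₁, P x⟩|²`,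
which is nonnegative by Cauchy–Schwarz. -/

theorem inner_mul_inner_le_inner_self_mul_inner_self {E : Type*} [NormedAddCommGroup E]
    [InnerProductSpace ℂ E] (x y : E) :
    inner ℂ x y * inner ℂ y x ≤ inner ℂ x x * inner ℂ y y := by
  rw [inner_self_eq_norm_sq_to_K, inner_self_eq_norm_sq_to_K, ← inner_conj_symm x y,
    Complex.conj_mul', norm_inner_symm y x, ← mul_pow]
  norm_cast
  exact Complex.real_le_real.mpr (pow_le_pow_left₀ (norm_nonneg _) (norm_inner_le_norm x y) 2)

namespace Matrix

variable {n : Type*} [Fintype n]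

theorem dotProduct_mul_dotProduct_le (u v : n → ℂ) :
    (star u ⬝ᵥ v) * (star v ⬝ᵥ u) ≤ (star u ⬝ᵥ u) * (star v ⬝ᵥ v) := by
  simpa only [EuclideanSpace.inner_toLp_toLp, dotProduct_comm _ (star _)] using
    inner_mul_inner_le_inner_self_mul_inner_self (WithLp.toLp 2 u) (WithLp.toLp 2 v)

def projOrthogonal (ψ v : n → ℂ) : n → ℂ := v - (star ψ ⬝ᵥ v) • ψ

variable [DecidableEq n]

def skewOuterAddInner (ψ₁ ψ₂ : n → ℂ) : Matrix n n ℂ :=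
  vecMulVec ψ₁ (star ψ₂) - vecMulVec ψ₂ (star ψ₁) + (star ψ₁ ⬝ᵥ ψ₂) • 1

theorem star_dotProduct_one_sub_skewOuterAddInner_mulVec {ψ₁ ψ₂ : n → ℂ}
    (h₁ : star ψ₁ ⬝ᵥ ψ₁ = 1) (h₂ : star ψ₂ ⬝ᵥ ψ₂ = 1) (x : n → ℂ) :
    let A := skewOuterAddInner ψ₁ ψ₂
    let y := projOrthogonal ψ₂ ψ₁
    let z := projOrthogonal ψ₂ x
    star x ⬝ᵥ ((1 - A * Aᴴ) *ᵥ x) =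
      (star y ⬝ᵥ y) * (star z ⬝ᵥ z) - (star y ⬝ᵥ z) * (star z ⬝ᵥ y) := by
  simp only [skewOuterAddInner, projOrthogonal, conjTranspose_add, conjTranspose_sub,
    conjTranspose_smul, conjTranspose_one, conjTranspose_vecMulVec, star_star,
    ← mulVec_mulVec, sub_mulVec, add_mulVec, one_mulVec, smul_mulVec, vecMulVec_mulVec,
    op_smul_eq_smul, dotProduct_sub, dotProduct_add, dotProduct_smul, sub_dotProduct,
    smul_dotProduct, star_sub, star_smul, smul_eq_mul, ← star_dotProduct, h₁, h₂]
  ring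

theorem one_sub_skewOuterAddInner_mul_conjTranspose_posSemidef {ψ₁ ψ₂ : n → ℂ}
    (h₁ : star ψ₁ ⬝ᵥ ψ₁ = 1) (h₂ : star ψ₂ ⬝ᵥ ψ₂ = 1) :
    (1 - skewOuterAddInner ψ₁ ψ₂ * (skewOuterAddInner ψ₁ ψ₂)ᴴ).PosSemidef :=
  posSemidef_iff_dotProduct_mulVec.mpr
    ⟨isHermitian_one.sub (isHermitian_mul_conjTranspose_self _), fun x => by
      rw [star_dotProduct_one_sub_skewOuterAddInner_mulVec h₁ h₂]
      exact sub_nonneg.mpr (dotProduct_mul_dotProduct_le _ _)⟩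

end Matrix

theorem stmt0_general (k : ℕ) (ψ₁ ψ₂ : Fin k → ℂ)
    (h₁ : star ψ₁ ⬝ᵥ ψ₁ = 1) (h₂ : star ψ₂ ⬝ᵥ ψ₂ = 1) :
    ((1 : Matrix (Fin k) (Fin k) ℂ)
      - (vecMulVec ψ₁ (star ψ₂) - vecMulVec ψ₂ (star ψ₁)
        + (star ψ₁ ⬝ᵥ ψ₂) • (1 : Matrix (Fin k) (Fin k) ℂ)) *
        (vecMulVec ψ₁ (star ψ₂) - vecMulVec ψ₂ (star ψ₁)
        + (star ψ₁ ⬝ᵥ ψ₂) • (1 : Matrix (Fin k) (Fin k) ℂ))ᴴ).PosSemidef :=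
  one_sub_skewOuterAddInner_mul_conjTranspose_posSemidef h₁ h₂

theorem stmt0 (k : ℕ) (ψ₁ ψ₂ : Fin k → ℂ)
    (hψ₁ : ψ₁ ≠ 0) (hψ₂ : ψ₂ ≠ 0)
    (h₁ : star ψ₁ ⬝ᵥ ψ₁ = 1) (h₂ : star ψ₂ ⬝ᵥ ψ₂ = 1) :
    ((1 : Matrix (Fin k) (Fin k) ℂ)
      - (vecMulVec ψ₁ (star ψ₂) - vecMulVec ψ₂ (star ψ₁)
        + (star ψ₁ ⬝ᵥ ψ₂) • (1 : Matrix (Fin k) (Fin k) ℂ)) *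
        (vecMulVec ψ₁ (star ψ₂) - vecMulVec ψ₂ (star ψ₁)
        + (star ψ₁ ⬝ᵥ ψ₂) • (1 : Matrix (Fin k) (Fin k) ℂ))ᴴ).PosSemidef :=
  stmt0_general k ψ₁ ψ₂ h₁ h₂
end
end

section
/- Let ψ₁ = e₁ and ψ₂ = e^{iλ} sin(α) e₁ + cos(α) e₂ be unit vectors in ℂ^k (k ≥ 2) where {e₁,...,e_k} is an orthonormal basis. Then the operator A = |ψ₁⟩⟨ψ₂| − |ψ₂⟩⟨ψ₁| + ⟨ψ₁|ψ₂⟩𝕀_k satisfies: the eigenvalues of A A† are 1 (with multiplicity 2) and sin²α (with multiplicity k−2). -/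
open Matrix Polynomial

noncomputable section

/-!
Writing `z = ⟨u, v⟩` for unit vectors `u`, `v`, a direct expansion gives
`A A† = |z|² 𝕀 + P` with `P = |u⟩⟨u| + |v⟩⟨v| - z |u⟩⟨v| - z̄ |v⟩⟨u|`. If `v = z u + c w` with
`w ⊥ u` a unit vector and `c` real, then `P = c² (|u⟩⟨u| + |w⟩⟨w|)`, so `A A†` is `|z|² + c² = 1`
on `span {u, w}` and `|z|²` on its orthogonal complement. For `u = e₁`, `w = e₂` this matrix
is diagonal.
-/

section OuterProducts

variable {R n : Type*} [CommRing R] [StarRing R] [Fintype n] [DecidableEq n]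

theorem vecMulVec_sub_vecMulVec_add_smul_one_mul_conjTranspose {u v : n → R} {z : R}
    (hu : star u ⬝ᵥ u = 1) (hv : star v ⬝ᵥ v = 1) (hz : star u ⬝ᵥ v = z) :
    (vecMulVec u (star v) - vecMulVec v (star u) + z • 1) *
        (vecMulVec u (star v) - vecMulVec v (star u) + z • 1)ᴴ =
      (z * star z) • 1 + (vecMulVec u (star u) + vecMulVec v (star v)
        - z • vecMulVec u (star v) - star z • vecMulVec v (star u)) := by
  have hz' : star v ⬝ᵥ u = star z := by rw [star_dotProduct, hz]
  simp only [conjTranspose_add, conjTranspose_sub, conjTranspose_smul, conjTranspose_vecMulVec,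
    star_star, conjTranspose_one, add_mul, sub_mul, mul_add, mul_sub, vecMulVec_mul_vecMulVec,
    mul_one, one_mul, Matrix.smul_mul, Matrix.mul_smul, hu, hv, hz, hz', vecMulVec_smul,
    one_smul]
  module

theorem mul_conjTranspose_eq_of_orthonormal {u v w : n → R} {z c : R} {A : Matrix n n R}
    (hu : star u ⬝ᵥ u = 1) (hw : star w ⬝ᵥ w = 1) (huw : star u ⬝ᵥ w = 0) (hc : star c = c)
    (hzc : z * star z + c * c = 1) (hv : v = z • u + c • w)
    (hA : A = vecMulVec u (star v) - vecMulVec v (star u) + (star u ⬝ᵥ v) • 1) :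
    A * Aᴴ = (z * star z) • 1 + (c * c) • (vecMulVec u (star u) + vecMulVec w (star w)) := by
  have hwu : star w ⬝ᵥ u = 0 := by rw [star_dotProduct, huw, star_zero]
  have hstar_v : star v = star z • star u + c • star w := by rw [hv, star_add, star_smul, star_smul, hc]
  have hz : star u ⬝ᵥ v = z := by
    simp only [hv, dotProduct_add, dotProduct_smul, hu, huw, smul_eq_mul]
    ring
  have hv_unit : star v ⬝ᵥ v = 1 := by
    rw [hstar_v, hv]
    simp only [dotProduct_add, add_dotProduct, dotProduct_smul, smul_dotProduct, hu, hw, huw, hwu,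
      smul_eq_mul]
    linear_combination hzc
  rw [hA, hz, vecMulVec_sub_vecMulVec_add_smul_one_mul_conjTranspose hu hv_unit hz, hstar_v, hv]
  simp only [vecMulVec_add, add_vecMulVec, vecMulVec_smul, smul_vecMulVec]
  linear_combination (norm := module) -(hzc • vecMulVec u (star u))

omit [Fintype n] in
theorem smul_one_add_smul_vecMulVec_single_pair {i j : n} (hij : i ≠ j) (a b : R) :
    a • 1 + b • (vecMulVec (Pi.single i 1) (star (Pi.single i 1)) +
        vecMulVec (Pi.single j 1) (star (Pi.single j 1))) =
      diagonal fun l => if l ∈ ({i, j} : Finset n) then a + b else a := by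
  ext l m
  by_cases hlm : l = m <;> by_cases hli : l = i <;> by_cases hlj : l = j <;>
    simp_all [vecMulVec_apply, Pi.single_apply, one_apply]

end OuterProducts

theorem Matrix.charpoly_diagonal_ite {R n : Type*} [CommRing R] [Fintype n] [DecidableEq n]
    (S : Finset n) (a b : R) :
    (diagonal fun i => if i ∈ S then a else b).charpoly =
      (X - C a) ^ S.card * (X - C b) ^ (Fintype.card n - S.card) := by
  simp only [charpoly_diagonal, apply_ite C, apply_ite (HSub.hSub X), Finset.prod_ite,
    Finset.prod_const, Finset.filter_mem_eq_inter, Finset.univ_inter, Finset.filter_not,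
    Finset.card_sdiff_of_subset S.subset_univ, Finset.card_univ]

theorem Complex.exp_I_mul_mul_sin_mul_star (lam α : ℝ) :
    exp (I * lam) * Real.sin α * star (exp (I * lam) * Real.sin α) = (Real.sin α : ℂ) ^ 2 := by
  rw [star_def, mul_conj', norm_mul, norm_exp_I_mul_ofReal, one_mul, norm_real, Real.norm_eq_abs,
    ← ofReal_pow, sq_abs, ofReal_pow]

theorem stmt1 (k : ℕ) (hk : 2 ≤ k) (lam α : ℝ)
    (ψ₁ ψ₂ : Fin k → ℂ)
    (hψ₁ : ψ₁ = (Pi.single (⟨0, by omega⟩ : Fin k) 1 : Fin k → ℂ))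
    (hψ₂ : ψ₂ = (Complex.exp (Complex.I * lam) * Real.sin α) •
        (Pi.single (⟨0, by omega⟩ : Fin k) 1 : Fin k → ℂ)
      + (Real.cos α : ℂ) • (Pi.single (⟨1, by omega⟩ : Fin k) 1 : Fin k → ℂ))
    (A : Matrix (Fin k) (Fin k) ℂ)
    (hA : A = vecMulVec ψ₁ (star ψ₂) - vecMulVec ψ₂ (star ψ₁)
        + (star ψ₁ ⬝ᵥ ψ₂) • (1 : Matrix (Fin k) (Fin k) ℂ)) :
    (A * Aᴴ).charpoly = (X - C 1) ^ 2 * (X - C ((Real.sin α : ℂ) ^ 2)) ^ (k - 2) := by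
  subst hψ₁
  have h01 : (⟨0, by omega⟩ : Fin k) ≠ ⟨1, by omega⟩ := by simp [Fin.ext_iff]
  have hunit (i : Fin k) : star (Pi.single i 1 : Fin k → ℂ) ⬝ᵥ Pi.single i 1 = 1 := by simp
  have hsc : (Real.sin α : ℂ) ^ 2 + Real.cos α * Real.cos α = 1 := by
    rw [← sq]; exact_mod_cast Real.sin_sq_add_cos_sq α
  rw [mul_conjTranspose_eq_of_orthonormal (hunit _) (hunit _) (by simp)
      (Complex.conj_ofReal _) (by rw [Complex.exp_I_mul_mul_sin_mul_star, hsc]) hψ₂ hA,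
    Complex.exp_I_mul_mul_sin_mul_star, smul_one_add_smul_vecMulVec_single_pair h01, hsc,
    charpoly_diagonal_ite, Finset.card_pair h01, Fintype.card_fin]
end
end

section
/- The map Ψ⁰_{2k} is self-dual with respect to the Hilbert–Schmidt inner product: Tr(A · Ψ⁰_{2k}(B)) = Tr(Ψ⁰_{2k}(A) · B) for all 2k×2k complex matrices A, B. -/
open Matrix ComplexOrder Kronecker

noncomputable section

/-- The reduction map `R_k(Y) = Tr(Y)·𝕀_k − Y` on `k × k` complex matrices. -/
def Rmap (k : ℕ) (Y : Matrix (Fin k) (Fin k) ℂ) : Matrix (Fin k) (Fin k) ℂ :=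
  Y.trace • (1 : Matrix (Fin k) (Fin k) ℂ) - Y

/-- The map `Ψ⁰_{2k}` on `2k × 2k` complex matrices (indexed by `Fin k ⊕ Fin k`),
defined blockwise via the reduction map `R_k`. -/
def Psi (k : ℕ) (X : Matrix (Fin k ⊕ Fin k) (Fin k ⊕ Fin k) ℂ) :
    Matrix (Fin k ⊕ Fin k) (Fin k ⊕ Fin k) ℂ :=
  ((k : ℂ))⁻¹ • Matrix.fromBlocks
    ((X.toBlocks₂₂.trace) • (1 : Matrix (Fin k) (Fin k) ℂ))
    (-(X.toBlocks₁₂ + Rmap k X.toBlocks₂₁))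
    (-(X.toBlocks₂₁ + Rmap k X.toBlocks₁₂))
    ((X.toBlocks₁₁.trace) • (1 : Matrix (Fin k) (Fin k) ℂ))

/-
Tr(A Ψ(B)) expands blockwise into Tr A₁₁ Tr B₂₂ + Tr A₂₂ Tr B₁₁ minus pairings of the
off-diagonal blocks. Each such pairing is symmetric in A and B because the reduction map is
self-dual, Tr(X R(Y)) = Tr X Tr Y − Tr(XY) = Tr(R(X) Y), and Tr(XY) = Tr(YX).
-/

namespace Matrix

variable {m n R : Type*} [Fintype m] [Fintype n] [CommRing R]

theorem trace_fromBlocks (A : Matrix m m R) (B : Matrix m n R) (C : Matrix n m R)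
    (D : Matrix n n R) : (fromBlocks A B C D).trace = A.trace + D.trace := by
  simp [trace, Fintype.sum_sum_type]

theorem trace_fromBlocks_mul_fromBlocks (A : Matrix m m R) (B : Matrix m n R)
    (C : Matrix n m R) (D : Matrix n n R) (A' : Matrix m m R) (B' : Matrix m n R)
    (C' : Matrix n m R) (D' : Matrix n n R) :
    (fromBlocks A B C D * fromBlocks A' B' C' D').trace =
      (A * A').trace + (B * C').trace + (C * B').trace + (D * D').trace := by
  rw [fromBlocks_multiply, trace_fromBlocks, trace_add, trace_add]
  ring

end Matrix

theorem trace_mul_Rmap {k : ℕ} (X Y : Matrix (Fin k) (Fin k) ℂ) :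
    (X * Rmap k Y).trace = X.trace * Y.trace - (X * Y).trace := by
  rw [Rmap, Matrix.mul_sub, Matrix.mul_smul, mul_one, trace_sub, trace_smul, smul_eq_mul, mul_comm]

theorem trace_Rmap_mul {k : ℕ} (X Y : Matrix (Fin k) (Fin k) ℂ) :
    (Rmap k X * Y).trace = X.trace * Y.trace - (X * Y).trace := by
  rw [Rmap, Matrix.sub_mul, Matrix.smul_mul, one_mul, trace_sub, trace_smul, smul_eq_mul]

theorem trace_mul_Rmap_eq_trace_Rmap_mul {k : ℕ} (X Y : Matrix (Fin k) (Fin k) ℂ) :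
    (X * Rmap k Y).trace = (Rmap k X * Y).trace := by
  rw [trace_mul_Rmap, trace_Rmap_mul]

theorem trace_mul_Psi (k : ℕ) (A B : Matrix (Fin k ⊕ Fin k) (Fin k ⊕ Fin k) ℂ) :
    (A * Psi k B).trace = (k : ℂ)⁻¹ * (A.toBlocks₁₁.trace * B.toBlocks₂₂.trace
      + A.toBlocks₂₂.trace * B.toBlocks₁₁.trace
      - (A.toBlocks₁₂ * B.toBlocks₂₁).trace - (A.toBlocks₁₂ * Rmap k B.toBlocks₁₂).trace
      - (A.toBlocks₂₁ * B.toBlocks₁₂).trace - (A.toBlocks₂₁ * Rmap k B.toBlocks₂₁).trace) := by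
  conv_lhs => rw [← fromBlocks_toBlocks A, Psi, Matrix.mul_smul, trace_smul,
    trace_fromBlocks_mul_fromBlocks]
  simp only [Matrix.mul_smul, Matrix.mul_one, mul_neg, Matrix.mul_add, trace_smul, trace_neg, trace_add,
    smul_eq_mul]
  ring

theorem stmt5_general (k : ℕ)
    (A B : Matrix (Fin k ⊕ Fin k) (Fin k ⊕ Fin k) ℂ) :
    (A * Psi k B).trace = (Psi k A * B).trace := by
  rw [← trace_mul_comm B, trace_mul_Psi, trace_mul_Psi,
    trace_mul_Rmap_eq_trace_Rmap_mul A.toBlocks₁₂, trace_mul_Rmap_eq_trace_Rmap_mul A.toBlocks₂₁,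
    trace_mul_comm (Rmap k _) B.toBlocks₁₂, trace_mul_comm (Rmap k _) B.toBlocks₂₁,
    trace_mul_comm A.toBlocks₁₂, trace_mul_comm A.toBlocks₂₁]
  ring

theorem stmt5 (k : ℕ) (hk : 2 ≤ k)
    (A B : Matrix (Fin k ⊕ Fin k) (Fin k ⊕ Fin k) ℂ) :
    (A * Psi k B).trace = (Psi k A * B).trace :=
  stmt5_general k A B
end
end
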